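/- Define the generating series F'(t) = \sum_T q^{-(m-1)|T|(|T|-1)/2 + |D(T)|} t^{|T|}, summing over all finite trees T \subset \Omega (including the empty tree). Then F'(t) satisfies the functional equation F'(t) = 1 + t \prod_{k=1}^m F'(q^{1-k} t). -/

import Mathlib

open PowerSeries LaurentPolynomial
open scoped Classical

/-- A (finite) tree: a finite set of words over `{1,…,m}` closed under prefixes. -/
def IsTree (m : ℕ) (T : Finset (List (Fin m))) : Prop :=
  ∀ ω ∈ T, ∀ ω' : List (Fin m), ω' <+: ω → ω' ∈ T

/-- The set `D(T)` of triples `(ω,k,ω')` with `ω ∈ T`, `ωk ∉ T`, `ω' ∈ T`,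
`ω' <_lex ωk`, and `ω'` not a prefix of `ω`. -/
noncomputable def Dset (m : ℕ) (T : Finset (List (Fin m))) :
    Finset ((List (Fin m) × Fin m) × List (Fin m)) :=
  ((T ×ˢ (Finset.univ : Finset (Fin m))) ×ˢ T).filter fun x =>
    x.1.1 ++ [x.1.2] ∉ T ∧ List.Lex (· < ·) x.2 (x.1.1 ++ [x.1.2]) ∧ ¬ x.2 <+: x.1.1

/-- The (finite) collection of all trees with exactly `d` elements; any such tree
consists of words of length `< d`. -/
noncomputable def treesOfSize (m d : ℕ) : Finset (Finset (List (Fin m))) :=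
  (((Finset.range d).biUnion fun n =>
      (Finset.univ : Finset (Fin n → Fin m)).image fun f => List.ofFn f).powerset).filter
    fun T => IsTree m T ∧ T.card = d

/-- The generating series `F'(t) = ∑_T q^{-(m-1)|T|(|T|-1)/2 + |D(T)|} t^{|T|}`, summed over
all finite trees, with coefficients in the Laurent polynomial ring (where `q = T 1`). -/
noncomputable def Fpaving (m : ℕ) : PowerSeries (LaurentPolynomial ℤ) :=
  PowerSeries.mk fun d =>
    ∑ S ∈ treesOfSize m d,
      (T (-(((m : ℤ) - 1) * d * ((d : ℤ) - 1) / 2) + (Dset m S).card) :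
        LaurentPolynomial ℤ)

/-!
Write `‖T‖` (`letterWeight`) for the sum, over the words of `T`, of their letters counted
from `0`. For every tree, `2 (|D(T)| + ‖T‖) = (m - 1) |T| (|T| - 1)`, so
`F'(t) = ∑_T q^{-‖T‖} t^{|T|}`. A nonempty tree is a root with trees `T_0, …, T_{m-1}` grafted
at its children, and `‖T‖ = ∑_k (k |T_k| + ‖T_k‖)`, which is the functional equation
coefficientwise.

The identity for `|D(T)|` follows from the same decomposition by induction: a triple of `D(T)`
either comes from a triple of some `D(T_i)`, or pairs a boundary edge of `T` in branch `i`
(there are `(m - 1) |T_i| + 1` of them) with any vertex in a branch `j < i`.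
-/

open Finset

theorem Finset.sq_sum_eq_sum_sq_add_two_mul_sum_filter_lt {ι R : Type*} [LinearOrder ι]
    [CommSemiring R] (s : Finset ι) (d : ι → R) :
    (∑ i ∈ s, d i) ^ 2 = ∑ i ∈ s, d i ^ 2 + 2 * ∑ i ∈ s, d i * ∑ j ∈ s with j < i, d j := by
  induction s using Finset.induction_on_max with
  | empty => simp
  | insert a s ha ih =>
    have ha' : a ∉ s := fun h => lt_irrefl a (ha a h)
    have hlow : ∀ i ∈ s, {j ∈ insert a s | j < i} = {j ∈ s | j < i} := fun i hi => by
      rw [filter_insert, if_neg (ha i hi).not_gt]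
    have htop : {j ∈ insert a s | j < a} = s := by
      rw [filter_insert, if_neg (lt_irrefl a), filter_true_of_mem ha]
    rw [sum_insert ha', sum_insert ha', sum_insert ha', htop,
      sum_congr rfl fun i hi => congrArg (d i * ∑ j ∈ ·, d j) (hlow i hi), add_sq, ih]
    ring

theorem LaurentPolynomial.T_sum {R ι : Type*} [CommSemiring R] (s : Finset ι) (g : ι → ℤ) :
    (T (∑ i ∈ s, g i) : R[T;T⁻¹]) = ∏ i ∈ s, T (g i) := by
  induction s using Finset.cons_induction with
  | empty => rw [sum_empty, prod_empty, T_zero]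
  | cons a s ha ih => rw [Finset.sum_cons, Finset.prod_cons, T_add, ih]

section

variable {m : ℕ}

section Graft

def branches (f : Fin m → Finset (List (Fin m))) (s : Finset (Fin m)) : Finset (List (Fin m)) :=
  s.biUnion fun k => (f k).map ⟨(k :: ·), List.cons_injective⟩

def graft (f : Fin m → Finset (List (Fin m))) : Finset (List (Fin m)) :=
  insert [] (branches f univ)

noncomputable def subtree (k : Fin m) (S : Finset (List (Fin m))) : Finset (List (Fin m)) :=
  S.preimage (k :: ·) List.cons_injective.injOn

variable {f : Fin m → Finset (List (Fin m))} {s : Finset (Fin m)} {S : Finset (List (Fin m))}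
  {k : Fin m} {σ : List (Fin m)}

theorem nil_notMem_branches : [] ∉ branches f s := by
  simp [branches]

@[simp]
theorem cons_mem_branches : k :: σ ∈ branches f s ↔ k ∈ s ∧ σ ∈ f k := by
  simp [branches]

theorem sum_branches {R : Type*} [AddCommMonoid R] (g : List (Fin m) → R) :
    ∑ ω ∈ branches f s, g ω = ∑ k ∈ s, ∑ σ ∈ f k, g (k :: σ) := by
  rw [branches, sum_biUnion]
  · simp
  · intro a _ b _ hab
    simp only [disjoint_left, mem_map, Function.Embedding.coeFn_mk]
    rintro _ ⟨σ, -, rfl⟩ ⟨τ, -, h⟩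
    exact hab (List.cons_eq_cons.mp h).1.symm

theorem card_branches : #(branches f s) = ∑ k ∈ s, #(f k) := by
  rw [card_eq_sum_ones, sum_branches]
  simp

@[simp]
theorem nil_mem_graft : [] ∈ graft f := mem_insert_self _ _

@[simp]
theorem cons_mem_graft : k :: σ ∈ graft f ↔ σ ∈ f k := by
  simp [graft]

theorem card_graft : #(graft f) = ∑ k, #(f k) + 1 := by
  rw [graft, card_insert_of_notMem nil_notMem_branches, card_branches]

@[simp]
theorem mem_subtree : σ ∈ subtree k S ↔ k :: σ ∈ S := mem_preimage

@[simp]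
theorem subtree_graft (k : Fin m) : subtree k (graft f) = f k := by
  ext; simp

theorem IsTree.nil_mem (hS : IsTree m S) (hne : S.Nonempty) : [] ∈ S :=
  let ⟨ω, hω⟩ := hne
  hS ω hω [] List.nil_prefix

theorem IsTree.graft_subtree (hS : IsTree m S) (hne : S.Nonempty) :
    graft (fun k => subtree k S) = S := by
  ext (_ | ⟨k, σ⟩)
  · simp [hS.nil_mem hne]
  · simp

theorem isTree_subtree (hS : IsTree m S) (k : Fin m) : IsTree m (subtree k S) :=
  fun _ hω _ h =>
    mem_subtree.mpr <| hS _ (mem_subtree.mp hω) _ (List.cons_prefix_cons.mpr ⟨rfl, h⟩)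

theorem isTree_graft (hf : ∀ k, IsTree m (f k)) : IsTree m (graft f) := by
  rintro (_ | ⟨k, σ⟩) hω (_ | ⟨j, τ⟩) h
  · exact nil_mem_graft
  · simp at h
  · exact nil_mem_graft
  · obtain ⟨rfl, hτ⟩ := List.cons_prefix_cons.mp h
    exact cons_mem_graft.mpr (hf _ σ (cons_mem_graft.mp hω) τ hτ)

end Graft

section Size

variable {S : Finset (List (Fin m))}

theorem IsTree.length_lt_card (hS : IsTree m S) {ω : List (Fin m)} (hω : ω ∈ S) :
    ω.length < #S := by
  have hinj : Set.InjOn (ω.take ·) (range (ω.length + 1)) := fun i hi j hj h => by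
    simp only [coe_range, Set.mem_Iio] at hi hj
    simpa [Nat.min_eq_left (Nat.le_of_lt_succ hi), Nat.min_eq_left (Nat.le_of_lt_succ hj)]
      using congrArg List.length h
  have hsub : (range (ω.length + 1)).image (ω.take ·) ⊆ S := by
    simp only [subset_iff, mem_image]
    rintro _ ⟨i, -, rfl⟩
    exact hS ω hω _ (List.take_prefix i ω)
  simpa [card_image_of_injOn hinj] using card_le_card hsub

theorem mem_treesOfSize {d : ℕ} : S ∈ treesOfSize m d ↔ IsTree m S ∧ #S = d := by
  rw [treesOfSize, mem_filter, and_iff_right_iff_imp]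
  rintro ⟨hS, rfl⟩
  simp only [mem_powerset, subset_iff, mem_biUnion, mem_range, mem_image, mem_univ, true_and]
  exact fun ω hω => ⟨ω.length, hS.length_lt_card hω, ω.get, List.ofFn_get ω⟩

end Size

def letterWeight (S : Finset (List (Fin m))) : ℕ :=
  ∑ ω ∈ S, (ω.map Fin.val).sum

theorem letterWeight_graft (f : Fin m → Finset (List (Fin m))) :
    letterWeight (graft f) = ∑ k : Fin m, (k * #(f k) + letterWeight (f k)) := by
  rw [letterWeight, graft, sum_insert nil_notMem_branches, sum_branches]
  simp [letterWeight, sum_add_distrib, mul_comm]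

section Boundary

def boundary (S : Finset (List (Fin m))) : Finset (List (Fin m) × Fin m) :=
  (S ×ˢ univ).filter fun p => p.1 ++ [p.2] ∉ S

variable {S : Finset (List (Fin m))}

@[simp]
theorem mem_boundary {p : List (Fin m) × Fin m} :
    p ∈ boundary S ↔ p.1 ∈ S ∧ p.1 ++ [p.2] ∉ S := by
  simp [boundary]

theorem IsTree.card_edges_add_one (hS : IsTree m S) (hne : S.Nonempty) :
    #((S ×ˢ univ).filter fun p : List (Fin m) × Fin m => p.1 ++ [p.2] ∈ S) + 1 = #S := by
  rw [← card_erase_add_one (hS.nil_mem hne)]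
  congr 1
  refine card_bij (fun p _ => p.1 ++ [p.2]) ?_ ?_ ?_
  · simp
  · rintro ⟨σ, k⟩ - ⟨τ, j⟩ - h
    obtain ⟨rfl, h⟩ := List.append_inj' h rfl
    simp_all
  · intro ω hω
    obtain ⟨hne, hω⟩ := mem_erase.mp hω
    refine ⟨(ω.dropLast, ω.getLast hne), ?_, List.dropLast_append_getLast hne⟩
    simp only [mem_filter, mem_product, mem_univ, and_true, List.dropLast_append_getLast hne]
    exact ⟨hS ω hω _ (List.dropLast_prefix ω), hω⟩

theorem IsTree.card_boundary (hS : IsTree m S) (hne : S.Nonempty) :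
    (#(boundary S) : ℤ) = (m - 1) * #S + 1 := by
  have hsplit := card_filter_add_card_filter_not (s := S ×ˢ univ)
    (p := fun p : List (Fin m) × Fin m => p.1 ++ [p.2] ∉ S)
  simp only [not_not, card_product, card_univ, Fintype.card_fin] at hsplit
  have hinterior := hS.card_edges_add_one hne
  rw [boundary]
  zify at hsplit hinterior
  linear_combination hsplit - hinterior

end Boundary

section DsetGraft

variable {f : Fin m → Finset (List (Fin m))} {S : Finset (List (Fin m))}

theorem mem_Dset {x : (List (Fin m) × Fin m) × List (Fin m)} :
    x ∈ Dset m S ↔ x.1 ∈ boundary S ∧ x.2 ∈ S ∧ x.2 < x.1.1 ++ [x.1.2] ∧ ¬ x.2 <+: x.1.1 := by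
  simp only [Dset, mem_filter, mem_product, mem_univ, and_true, mem_boundary, List.lex_lt]
  tauto

theorem nil_mem_Dset_graft {k : Fin m} (hk : IsTree m (f k)) {ω' : List (Fin m)} :
    (([], k), ω') ∈ Dset m (graft f) ↔ f k = ∅ ∧ ω' ∈ branches f (Iio k) := by
  have hleaf : [] ∉ f k ↔ f k = ∅ := by
    rw [← not_nonempty_iff_eq_empty]
    exact not_congr ⟨fun h => ⟨_, h⟩, hk.nil_mem⟩
  rcases ω' with _ | ⟨j, τ⟩
  · simp [mem_Dset, nil_notMem_branches]
  · simp [mem_Dset, hleaf, List.cons_lt_cons_iff]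
    tauto

theorem cons_mem_Dset_graft {i k : Fin m} {σ ω' : List (Fin m)} :
    ((i :: σ, k), ω') ∈ Dset m (graft f) ↔
      ((σ, k) ∈ boundary (f i) ∧ ω' ∈ branches f (Iio i)) ∨
        ∃ τ, ((σ, k), τ) ∈ Dset m (f i) ∧ ω' = i :: τ := by
  rcases ω' with _ | ⟨j, τ⟩
  · simp [mem_Dset, nil_notMem_branches]
  · simp [mem_Dset, List.cons_lt_cons_iff]
    obtain hji | rfl | hij := lt_trichotomy j i
    · simp [hji, hji.ne]
    · simp
    · simp [hij.ne', hij.not_gt]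

/-- The boundary edges of `graft f` that lie in branch `i`. -/
noncomputable def boundaryAt (f : Fin m → Finset (List (Fin m))) (i : Fin m) :
    Finset (List (Fin m) × Fin m) :=
  if f i = ∅ then {([], i)}
  else (boundary (f i)).map (.prodMap ⟨(i :: ·), List.cons_injective⟩ (.refl _))

noncomputable def DsetAt (f : Fin m → Finset (List (Fin m))) (i : Fin m) :
    Finset ((List (Fin m) × Fin m) × List (Fin m)) :=
  boundaryAt f i ×ˢ branches f (Iio i) ∪
    (Dset m (f i)).map (.prodMap (.prodMap ⟨(i :: ·), List.cons_injective⟩ (.refl _))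
      ⟨(i :: ·), List.cons_injective⟩)

def branchIndex (x : (List (Fin m) × Fin m) × List (Fin m)) : Fin m :=
  x.1.1.head?.getD x.1.2

@[simp]
theorem nil_mem_boundaryAt {i k : Fin m} : ([], k) ∈ boundaryAt f i ↔ f i = ∅ ∧ k = i := by
  rw [boundaryAt]
  split_ifs with h <;> simp [h, eq_comm]

@[simp]
theorem cons_mem_boundaryAt {i j k : Fin m} {σ : List (Fin m)} :
    (j :: σ, k) ∈ boundaryAt f i ↔ j = i ∧ (σ, k) ∈ boundary (f i) := by
  rw [boundaryAt]
  split_ifs with h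
  · simp [h]
  · simp [eq_comm (a := i), and_comm]

theorem IsTree.card_boundaryAt {i : Fin m} (hi : IsTree m (f i)) :
    (#(boundaryAt f i) : ℤ) = (m - 1) * #(f i) + 1 := by
  rw [boundaryAt]
  split_ifs with h
  · simp [h]
  · rw [card_map, hi.card_boundary (nonempty_iff_ne_empty.mpr h)]

theorem card_DsetAt (i : Fin m) :
    #(DsetAt f i) = #(boundaryAt f i) * ∑ j ∈ Iio i, #(f j) + #(Dset m (f i)) := by
  rw [DsetAt, card_union_of_disjoint, card_product, card_branches, card_map]
  simp only [disjoint_left, mem_product, mem_map]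
  rintro _ ⟨-, hlow⟩ ⟨_, -, rfl⟩
  simp at hlow

theorem filter_branchIndex_Dset_graft (hf : ∀ k, IsTree m (f k)) (i : Fin m) :
    (Dset m (graft f)).filter (branchIndex · = i) = DsetAt f i := by
  ext ⟨⟨_ | ⟨j, σ⟩, k⟩, ω'⟩
  · rw [mem_filter, nil_mem_Dset_graft (hf k)]
    by_cases hki : k = i
    · subst hki; simp [branchIndex, DsetAt]
    · simp [branchIndex, DsetAt, hki]
  · rw [mem_filter, cons_mem_Dset_graft]
    by_cases hji : j = i
    · subst hji; simp [branchIndex, DsetAt, eq_comm (b := ω')]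
    · simp [branchIndex, DsetAt, hji, Ne.symm hji]

theorem card_Dset_graft (hf : ∀ k, IsTree m (f k)) :
    #(Dset m (graft f)) = ∑ i, #(DsetAt f i) := by
  rw [card_eq_sum_card_fiberwise (f := branchIndex) (t := univ) fun _ _ => mem_univ _]
  simp_rw [filter_branchIndex_Dset_graft hf]

end DsetGraft

theorem Fin.sum_sum_Iio_add_val_mul (d : Fin m → ℤ) :
    ∑ i, (∑ j ∈ Iio i, d j + i * d i) = (m - 1) * ∑ i, d i := by
  have hswap : ∑ i, ∑ j ∈ Iio i, d j = ∑ j, ∑ _i ∈ Ioi j, d j :=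
    sum_comm' fun _ _ => by simp
  rw [sum_add_distrib, hswap, mul_sum, ← sum_add_distrib]
  refine sum_congr rfl fun j _ => ?_
  have hj := j.isLt
  rw [Finset.sum_const, Fin.card_Ioi, nsmul_eq_mul, Nat.cast_sub (by omega),
    Nat.cast_sub (by omega)]
  push_cast
  ring

theorem two_mul_sum_graft_exponent (d e : Fin m → ℤ)
    (he : ∀ i, 2 * e i = (m - 1) * d i * (d i - 1)) :
    2 * ∑ i, (((m - 1) * d i + 1) * ∑ j ∈ Iio i, d j + i * d i + e i)
      = (m - 1) * (∑ i, d i + 1) * (∑ i, d i) := by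
  have hsq := sq_sum_eq_sum_sq_add_two_mul_sum_filter_lt univ d
  have hlin := Fin.sum_sum_Iio_add_val_mul d
  simp only [filter_gt_eq_Iio] at hsq
  have hterm : ∀ i, 2 * (((m - 1) * d i + 1) * ∑ j ∈ Iio i, d j + i * d i + e i)
      = (m - 1) * (d i ^ 2 + 2 * (d i * ∑ j ∈ Iio i, d j) - d i)
        + 2 * (∑ j ∈ Iio i, d j + i * d i) := fun i => by
    linear_combination he i
  rw [mul_sum, sum_congr rfl fun i _ => hterm i, sum_add_distrib, ← mul_sum, ← mul_sum,
    sum_sub_distrib, sum_add_distrib, ← mul_sum, hlin]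
  linear_combination (1 - m : ℤ) * hsq

theorem IsTree.two_mul_card_Dset_add_letterWeight {S : Finset (List (Fin m))} (hS : IsTree m S) :
    2 * ((#(Dset m S) : ℤ) + letterWeight S) = (m - 1) * #S * (#S - 1) := by
  induction hn : #S using Nat.strong_induction_on generalizing S with
  | _ n ih =>
  obtain rfl | hne := S.eq_empty_or_nonempty
  · simp [Dset, letterWeight, ← hn]
  set f := fun k => subtree k S
  have hf : ∀ k, IsTree m (f k) := isTree_subtree hS
  have hcard : #S = ∑ k, #(f k) + 1 := by rw [← card_graft, hS.graft_subtree hne]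
  have hsub : ∀ k, 2 * ((#(Dset m (f k)) : ℤ) + letterWeight (f k))
      = (m - 1) * #(f k) * (#(f k) - 1) := fun k => by
    refine ih _ ?_ (hf k) rfl
    have := single_le_sum (fun i _ => Nat.zero_le #(f i)) (mem_univ k)
    omega
  rw [← hn, ← hS.graft_subtree hne, card_Dset_graft hf, letterWeight_graft, card_graft]
  simp only [card_DsetAt]
  push_cast [(hf _).card_boundaryAt, ← sum_add_distrib]
  simp only [add_sub_cancel_right]
  rw [← two_mul_sum_graft_exponent _ _ hsub]
  congr 2 with i
  ring

noncomputable def forestsOfSize (m n : ℕ) :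
    Finset ((_ : Fin m →₀ ℕ) × (Fin m → Finset (List (Fin m)))) :=
  (finsuppAntidiag univ n).sigma fun l => Fintype.piFinset fun k => treesOfSize m (l k)

theorem mem_forestsOfSize {n : ℕ} {x : (_ : Fin m →₀ ℕ) × (Fin m → Finset (List (Fin m)))} :
    x ∈ forestsOfSize m n ↔
      ∑ k, x.1 k = n ∧ ∀ k, IsTree m (x.2 k) ∧ #(x.2 k) = x.1 k := by
  simp [forestsOfSize, mem_treesOfSize]

theorem sum_treesOfSize_succ {R : Type*} [AddCommMonoid R] (n : ℕ)
    (g : Finset (List (Fin m)) → R) :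
    ∑ S ∈ treesOfSize m (n + 1), g S =
      ∑ x ∈ forestsOfSize m n,
        g (graft x.2) := by
  have hne {S : Finset (List (Fin m))} (hS : S ∈ treesOfSize m (n + 1)) : S.Nonempty :=
    card_pos.mp ((mem_treesOfSize.mp hS).2 ▸ n.succ_pos)
  refine sum_nbij' (fun S => ⟨Finsupp.equivFunOnFinite.symm fun k => #(subtree k S),
      fun k => subtree k S⟩) (fun x => graft x.2) ?_ ?_ ?_ ?_ ?_
  · intro S hS
    obtain ⟨hS', hcard⟩ := mem_treesOfSize.mp hS
    rw [← hS'.graft_subtree (hne hS), card_graft] at hcard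
    refine mem_forestsOfSize.mpr ⟨?_, fun k => ⟨isTree_subtree hS' k, ?_⟩⟩
    · simpa using hcard
    · simp
  · rintro ⟨l, p⟩ hx
    obtain ⟨hsum, hp⟩ := mem_forestsOfSize.mp hx
    rw [mem_treesOfSize, card_graft]
    refine ⟨isTree_graft fun k => (hp k).1, ?_⟩
    simp only [fun k => (hp k).2, hsum]
  · intro S hS
    exact (mem_treesOfSize.mp hS).1.graft_subtree (hne hS)
  · rintro ⟨l, p⟩ hx
    obtain ⟨-, hp⟩ := mem_forestsOfSize.mp hx
    simp only [subtree_graft, (hp _).2, Finsupp.equivFunOnFinite_symm_coe]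
  · intro S hS
    rw [(mem_treesOfSize.mp hS).1.graft_subtree (hne hS)]

noncomputable def treeSeries (m : ℕ) : PowerSeries (LaurentPolynomial ℤ) :=
  PowerSeries.mk fun d => ∑ S ∈ treesOfSize m d, T (-(letterWeight S : ℤ))

theorem Fpaving_eq_treeSeries : Fpaving m = treeSeries m := by
  refine PowerSeries.ext fun d => ?_
  rw [Fpaving, treeSeries, coeff_mk, coeff_mk]
  refine sum_congr rfl fun S hS => ?_
  obtain ⟨hS', rfl⟩ := mem_treesOfSize.mp hS
  rw [← hS'.two_mul_card_Dset_add_letterWeight, Int.mul_ediv_cancel_left _ two_ne_zero,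
    neg_add, add_right_comm, neg_add_cancel, zero_add]

theorem treesOfSize_zero : treesOfSize m 0 = {∅} := by
  ext S
  rw [mem_treesOfSize, mem_singleton, card_eq_zero, and_iff_right_of_imp]
  rintro rfl _ h
  exact absurd h (notMem_empty _)

theorem coeff_rescale_treeSeries (k d : ℕ) :
    coeff d (rescale (T (-(k : ℤ))) (treeSeries m)) =
      ∑ S ∈ treesOfSize m d, T (-((k * d + letterWeight S : ℕ) : ℤ)) := by
  rw [coeff_rescale, treeSeries, coeff_mk, mul_sum]
  refine sum_congr rfl fun S _ => ?_
  rw [T_pow, ← T_add]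
  congr 1
  push_cast
  ring

theorem coeff_prod_rescale_treeSeries (n : ℕ) :
    coeff n (∏ k ∈ range m, rescale (T (-(k : ℤ))) (treeSeries m)) =
      ∑ x ∈ forestsOfSize m n,
        T (-(∑ k : Fin m, ((k : ℕ) * x.1 k + letterWeight (x.2 k) : ℕ) : ℤ)) := by
  rw [← Fin.prod_univ_eq_prod_range (fun k => rescale (T (-(k : ℤ))) (treeSeries m)), coeff_prod,
    forestsOfSize, sum_sigma]
  refine sum_congr rfl fun l _ => ?_
  simp only [coeff_rescale_treeSeries, prod_univ_sum, push_cast, ← sum_neg_distrib, T_sum]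

theorem treeSeries_functional_equation :
    treeSeries m = 1 + X * ∏ k ∈ range m, rescale (T (-(k : ℤ))) (treeSeries m) := by
  refine PowerSeries.ext fun d => ?_
  rcases d with _ | n
  · simp [treeSeries, treesOfSize_zero, letterWeight]
  · rw [map_add, coeff_one, if_neg n.succ_ne_zero, zero_add, coeff_succ_X_mul,
      coeff_prod_rescale_treeSeries, treeSeries, coeff_mk, sum_treesOfSize_succ]
    refine sum_congr rfl fun x hx => ?_
    obtain ⟨-, hp⟩ := mem_forestsOfSize.mp hx
    simp only [letterWeight_graft, (hp _).2, Nat.cast_sum]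

end

theorem Fpaving_functional_equation_general (m : ℕ) :
    Fpaving m = 1 + X * ∏ k ∈ Finset.range m,
      rescale ((T (-(k : ℤ))) : LaurentPolynomial ℤ) (Fpaving m) := by
  rw [Fpaving_eq_treeSeries]
  exact treeSeries_functional_equation

/-- `F'(t)` satisfies the functional equation `F'(t) = 1 + t·∏_{k=1}^m F'(q^{1-k}t)`. -/
theorem Fpaving_functional_equation (m : ℕ) (hm : 1 ≤ m) :
    Fpaving m = 1 + X * ∏ k ∈ Finset.range m,
      rescale ((T (-(k : ℤ))) : LaurentPolynomial ℤ) (Fpaving m) :=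
  Fpaving_functional_equation_general m
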